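/- arXiv:1605.09659 — 3 statements merged into one kernel-verified Lean document; each statement's English description precedes it below -/
import Mathlib

section
/- Let K ⊆ L be finite fields with |K| = q and [L : K] = m, and let θ be a character of Lˣ in general position. Then the m characters θ^{(q^i)} for 0 ≤ i < m, defined by θ^{(q^i)}(y) = θ(y^{q^i}), are pairwise distinct; that is, the orbit of θ under the Frobenius action on characters has exactly m elements. -/
/-! Frobenius acts on characters of `Lˣ` by `θ ↦ θ ^ q`, and `θ ^ q ^ m = θ`. If
`θ ^ q ^ i = θ ^ q ^ j` with `i < j < m`, then `θ` is fixed by `θ ↦ θ ^ q ^ g` for the proper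
divisor `g = gcd (j - i) m` of `m`. Let `E` be the subfield of `L` with `q ^ g` elements. The norm
`Lˣ → Eˣ` is surjective, and since it is the power map `y ↦ y ^ ((q ^ m - 1) / (q ^ g - 1))`
on a cyclic group, its kernel consists of the `(q ^ g - 1)`-th powers, which `θ` kills. So `θ`
factors through the norm to `E`, against general position. -/

/-- A character `θ` of `Lˣ` is in *general position* (over `K`) if there is no proper
intermediate field `K ⊆ E ⊊ L` and character `θ'` of `Eˣ` with `θ = θ' ∘ N_{L/E}`,
where `N_{L/E} : Lˣ → Eˣ` is the norm map. -/
def IsGeneralPosition (K : Type*) {L : Type*} [Field K] [Field L] [Algebra K L]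
    (θ : Lˣ →* ℂˣ) : Prop :=
  ¬ ∃ (E : IntermediateField K L) (_ : E ≠ ⊤) (θ' : (↥E)ˣ →* ℂˣ),
      θ = θ'.comp (Units.map (Algebra.norm (↥E) : L →* ↥E))

theorem IsCyclic.ker_powMonoidHom_eq_range {G : Type*} [CommGroup G] [IsCyclic G] [Finite G]
    {a b : ℕ} (h : Nat.card G = a * b) :
    (powMonoidHom b : G →* G).ker = (powMonoidHom a).range := by
  have ha : 0 < a := Nat.pos_of_mul_pos_right (h ▸ Nat.card_pos)
  refine (Subgroup.eq_of_le_of_card_ge ?_ ?_).symm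
  · rintro _ ⟨z, rfl⟩
    rw [MonoidHom.mem_ker, powMonoidHom_apply, powMonoidHom_apply, ← pow_mul, ← h,
      pow_card_eq_one']
  · rw [IsCyclic.card_powMonoidHom_ker, IsCyclic.card_powMonoidHom_range, h,
      Nat.gcd_mul_left_left, Nat.gcd_mul_right_left, Nat.mul_div_cancel_left _ ha]

theorem pow_pow_sub_eq_self_of_pow_pow_eq {M : Type*} [Monoid M] {x : M} {q m i j : ℕ}
    (hm : x ^ q ^ m = x) (hi : i ≤ m) (hij : i ≤ j) (h : x ^ q ^ i = x ^ q ^ j) :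
    x ^ q ^ (j - i) = x := by
  calc x ^ q ^ (j - i) = (x ^ q ^ m) ^ q ^ (j - i) := by rw [hm]
    _ = (x ^ q ^ j) ^ q ^ (m - i) := by
        rw [← pow_mul, ← pow_mul, ← pow_add, ← pow_add]; congr 2; omega
    _ = x := by rw [← h, ← pow_mul, ← pow_add, Nat.add_sub_cancel' hi, hm]

theorem pow_pow_gcd_eq_self {G : Type*} [Group G] {x : G} {q a b : ℕ} (hq : q ≠ 0)
    (ha : x ^ q ^ a = x) (hb : x ^ q ^ b = x) : x ^ q ^ a.gcd b = x := by
  have key : ∀ n, x ^ q ^ n = x ↔ x ^ (q ^ n - 1) = 1 := fun n => by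
    rw [← pow_sub_one_mul (pow_ne_zero n hq), mul_eq_right]
  rw [key] at *
  rw [← Nat.pow_sub_one_gcd_pow_sub_one, pow_gcd_eq_one]
  exact ⟨ha, hb⟩

theorem MonoidHom.comp_powMonoidHom {G A : Type*} [CommMonoid G] [CommMonoid A] (χ : G →* A)
    (n : ℕ) :
    χ.comp (powMonoidHom n) = χ ^ n := by
  ext y; simp

namespace FiniteField

variable {K L : Type*} [Field K] [Field L] [Algebra K L] [Finite L]

theorem ker_unitsMap_norm :
    (Units.map (Algebra.norm K : L →* K)).ker =
      (powMonoidHom (Nat.card K - 1) : Lˣ →* Lˣ).range := by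
  have : Finite K := Finite.of_injective _ (algebraMap K L).injective
  have hdvd : Nat.card K - 1 ∣ Nat.card L - 1 := by
    simpa [← Module.natCard_eq_pow_finrank] using
      Nat.sub_dvd_pow_sub_pow (Nat.card K) 1 (Module.finrank K L)
  rw [← IsCyclic.ker_powMonoidHom_eq_range (b := (Nat.card L - 1) / (Nat.card K - 1))]
  · ext u
    simp [Units.ext_iff, ← (algebraMap K L).injective.eq_iff, algebraMap_norm_eq_pow]
  · rw [Nat.card_units, Nat.mul_div_cancel' hdvd]

theorem exists_eq_comp_unitsMap_norm {A : Type*} [CommGroup A] (χ : Lˣ →* A)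
    (hχ : χ ^ Nat.card K = χ) :
    ∃ χ' : Kˣ →* A, χ = χ'.comp (Units.map (Algebra.norm K : L →* K)) := by
  have hker : (Units.map (Algebra.norm K : L →* K)).ker ≤ χ.ker := by
    rw [ker_unitsMap_norm]
    rintro _ ⟨z, rfl⟩
    have : Finite K := Finite.of_injective _ (algebraMap K L).injective
    have hz : χ z ^ Nat.card K = χ z := congr($hχ z)
    rwa [MonoidHom.mem_ker, powMonoidHom_apply, map_pow, ← mul_eq_right,
      pow_sub_one_mul Nat.card_pos.ne']
  exact ⟨_, (MonoidHom.liftOfRightInverse_comp _ _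
    (Function.rightInverse_surjInv (unitsMap_norm_surjective K L)) ⟨χ, hker⟩).symm⟩

theorem exists_intermediateField_finrank_eq {g : ℕ} (hg : g ∣ Module.finrank K L) :
    ∃ E : IntermediateField K L, Module.finrank K E = g := by
  have : Finite K := Finite.of_injective _ (algebraMap K L).injective
  obtain ⟨p, _⟩ := CharP.exists K
  have : Fact p.Prime := ⟨CharP.char_is_prime K p⟩
  have : NeZero g := ⟨fun h => Module.finrank_pos.ne' (Nat.eq_zero_of_zero_dvd (h ▸ hg))⟩
  obtain ⟨f⟩ := nonempty_algHom_of_finrank_dvd (K := Extension K p g) (L := L)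
    (by rwa [finrank_extension])
  exact ⟨f.fieldRange, (AlgEquiv.ofInjectiveField f).toLinearEquiv.finrank_eq.symm.trans
    (finrank_extension K p g)⟩

end FiniteField

/-- Let `K ⊆ L` be finite fields with `|K| = q` and `[L : K] = m`, and let `θ` be a
character of `Lˣ` in general position.  Then the `m` characters `θ^{(qⁱ)}` for
`0 ≤ i < m`, defined by `θ^{(qⁱ)} y = θ (y ^ qⁱ)`, are pairwise distinct; that is,
the orbit of `θ` under the Frobenius action on characters has exactly `m` elements. -/
theorem frobenius_orbit_of_general_position
    (K L : Type*) [Field K] [Field L] [Fintype K] [Fintype L] [Algebra K L]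
    (q m : ℕ) (hq : Fintype.card K = q) (hm : Module.finrank K L = m)
    (θ : Lˣ →* ℂˣ) (hθ : IsGeneralPosition K θ) :
    ∀ i j : ℕ, i < m → j < m →
      θ.comp (powMonoidHom (q ^ i)) = θ.comp (powMonoidHom (q ^ j)) → i = j := by
  intro i j hi hj h
  by_contra hne
  wlog hij : i < j generalizing i j
  · exact this j i hj hi h.symm (Ne.symm hne) (by omega)
  rw [MonoidHom.comp_powMonoidHom, MonoidHom.comp_powMonoidHom] at h
  have hθm : θ ^ q ^ m = θ := by
    rw [← MonoidHom.comp_powMonoidHom, ← hq, ← hm, ← Module.card_eq_pow_finrank]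
    refine MonoidHom.ext fun y => congrArg θ (Units.ext ?_)
    simp [FiniteField.pow_card]
  have hθg : θ ^ q ^ (j - i).gcd m = θ :=
    pow_pow_gcd_eq_self (x := θ) (hq ▸ Fintype.card_ne_zero)
      (pow_pow_sub_eq_self_of_pow_pow_eq hθm hi.le hij.le h) hθm
  obtain ⟨E, hE⟩ := FiniteField.exists_intermediateField_finrank_eq (K := K) (L := L)
    (g := (j - i).gcd m) (hm ▸ Nat.gcd_dvd_right (j - i) m)
  refine hθ ⟨E, fun htop => ?_, FiniteField.exists_eq_comp_unitsMap_norm θ ?_⟩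
  · rw [htop, IntermediateField.finrank_top', hm] at hE
    have := Nat.gcd_le_left m (Nat.sub_pos_of_lt hij)
    omega
  · rwa [Module.natCard_eq_pow_finrank (K := K), Nat.card_eq_fintype_card, hq, hE]
end

section
/- Let K ⊆ L be finite fields with |K| = q and [L : K] = m ≥ 2, and let χ₀ be a character of Kˣ. Then the number of characters θ of Lˣ in general position with θ|_{Kˣ} = χ₀ is at least q^{m−1} − 1. -/
/-- The restriction of a character `θ : Lˣ →* ℂˣ` to `Kˣ`. -/
noncomputable def charRestrict (K : Type*) {L : Type*} [Field K] [Field L] [Algebra K L]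
    (θ : Lˣ →* ℂˣ) : Kˣ →* ℂˣ :=
  θ.comp (Units.map (algebraMap K L : K →* L))

/-!
The characters of `Lˣ` restricting to `χ₀` form a coset of the dual of `Lˣ ⧸ Kˣ`, so there are
`r = (q ^ m - 1) / (q - 1) = 1 + q + ⋯ + q ^ (m - 1)` of them. A character factoring through the
norm to a proper subfield of degree `d ∣ m` is killed by `q ^ d - 1`; the ones with restriction
`χ₀` form (if any) a coset of the dual of the cyclic group `Lˣ ⧸ (Kˣ ⊔ (Lˣ) ^ (q ^ d - 1))`,
whose order divides `gcd r (q ^ d - 1)`. For `m = 2` this gcd is at most `2`; for `m ≥ 3` it is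
below `q ^ d` with `d ≤ m - 2`. Either way at most `r - (q ^ (m - 1) - 1)` characters are lost.
-/

open Finset Module

theorem MonoidHom.domRestrict_eq_domRestrict_iff {G N : Type*} [Group G] [Monoid N]
    (φ ψ : G →* N) (H : Subgroup G) : φ.domRestrict H = ψ.domRestrict H ↔ ∀ x ∈ H, φ x = ψ x := by
  simp [MonoidHom.ext_iff]

theorem MonoidHom.comp_eq_iff_domRestrict_range_eq {A G N : Type*} [Group A] [Group G] [Monoid N]
    {ι : A →* G} (hι : Function.Injective ι) (φ : G →* N) (χ : A →* N) :
    φ.comp ι = χ ↔ φ.domRestrict ι.range = χ.comp (MonoidHom.ofInjective hι).symm.toMonoidHom := by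
  constructor
  · rintro rfl
    ext x
    obtain ⟨a, rfl⟩ := (MonoidHom.ofInjective hι).surjective x
    simp [MonoidHom.ofInjective_apply]
  · intro h
    ext a
    simpa [MonoidHom.ofInjective_apply] using DFunLike.congr_fun h (MonoidHom.ofInjective hι a)

namespace CommGroup

variable {G M : Type*} [CommGroup G] [Finite G] [CommMonoid M]
  [HasEnoughRootsOfUnity M (Monoid.exponent G)]

theorem finite_monoidHom_of_hasEnoughRootsOfUnity : Finite (G →* Mˣ) :=
  Nat.finite_of_card_ne_zero <| by
    rw [card_monoidHom_of_hasEnoughRootsOfUnity]; exact Nat.card_pos.ne'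

theorem card_domRestrict_eq_card_quotient (H : Subgroup G) (χ : H →* Mˣ) :
    Nat.card {φ : G →* Mˣ // φ.domRestrict H = χ} = Nat.card (G ⧸ H) := by
  obtain ⟨φ₀, rfl⟩ := MonoidHom.domRestrict_surjective M H χ
  rw [← card_domRestrictHom_ker M H]
  refine Nat.card_congr (Equiv.subtypeEquiv (Equiv.divRight φ₀) fun φ => ?_)
  simp [MonoidHom.domRestrict_eq_domRestrict_iff, div_eq_one]

theorem card_domRestrict_pow_eq_one_le (H : Subgroup G) (χ : H →* Mˣ) (D : ℕ) :
    Nat.card {φ : G →* Mˣ // φ.domRestrict H = χ ∧ φ ^ D = 1} ≤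
      Nat.card (G ⧸ (H ⊔ (powMonoidHom D).range)) := by
  have := finite_monoidHom_of_hasEnoughRootsOfUnity (G := G) (M := M)
  rcases isEmpty_or_nonempty {φ : G →* Mˣ // φ.domRestrict H = χ ∧ φ ^ D = 1} with _ | ⟨φ₀, hφ₀⟩
  · simp
  rw [← card_domRestrict_eq_card_quotient _ (φ₀.domRestrict _)]
  refine Nat.card_le_card_of_injective (fun φ => ⟨φ.1, ?_⟩)
    fun φ ψ h => Subtype.ext (by simpa using h)
  have agree_on_H : H ≤ φ.1.eqLocus φ₀ :=
    (φ.1.domRestrict_eq_domRestrict_iff φ₀ H).mp (φ.2.1.trans hφ₀.1.symm)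
  have agree_on_pow : (powMonoidHom D).range ≤ φ.1.eqLocus φ₀ := by
    rintro _ ⟨x, rfl⟩
    show φ.1 (x ^ D) = φ₀ (x ^ D)
    rw [map_pow, map_pow, ← MonoidHom.pow_apply, ← MonoidHom.pow_apply, φ.2.2, hφ₀.2]
  exact (MonoidHom.domRestrict_eq_domRestrict_iff _ _ _).mpr fun x hx =>
    sup_le agree_on_H agree_on_pow hx

end CommGroup

namespace IsCyclic

theorem card_quotient_dvd_of_forall_pow_mem {G : Type*} [CommGroup G] [IsCyclic G]
    {S : Subgroup G} {D : ℕ} (h : ∀ x : G, x ^ D ∈ S) : Nat.card (G ⧸ S) ∣ D := by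
  have := isCyclic_of_surjective _ (QuotientGroup.mk'_surjective S)
  rw [← IsCyclic.exponent_eq_card]
  refine Monoid.exponent_dvd_of_forall_pow_eq_one fun x => ?_
  induction x using QuotientGroup.induction_on with
  | H x => rw [← QuotientGroup.mk_pow, QuotientGroup.eq_one_iff]; exact h x

theorem card_domRestrict_pow_eq_one_le_gcd {G M : Type*} [CommGroup G] [Finite G] [IsCyclic G]
    [CommMonoid M] [HasEnoughRootsOfUnity M (Monoid.exponent G)]
    (H : Subgroup G) (χ : H →* Mˣ) (D : ℕ) :
    Nat.card {φ : G →* Mˣ // φ.domRestrict H = χ ∧ φ ^ D = 1} ≤ Nat.gcd (Nat.card (G ⧸ H)) D :=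
  (CommGroup.card_domRestrict_pow_eq_one_le H χ D).trans <|
    Nat.le_of_dvd (Nat.gcd_pos_of_pos_left _ Nat.card_pos) <|
      Nat.dvd_gcd (Subgroup.index_dvd_of_le le_sup_left)
        (card_quotient_dvd_of_forall_pow_mem fun x => Subgroup.mem_sup_right ⟨x, rfl⟩)

end IsCyclic

theorem Nat.card_subtype_le_card_add_sum {α ι : Type*} [Finite α] (s : Finset ι)
    {P Q : α → Prop} {R : ι → α → Prop} (h : ∀ x, P x → Q x ∨ ∃ i ∈ s, R i x) :
    Nat.card {x // P x} ≤ Nat.card {x // Q x} + ∑ i ∈ s, Nat.card {x // R i x} := by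
  classical
  have := Fintype.ofFinite α
  simp only [Nat.card_eq_fintype_card, Fintype.card_subtype]
  calc #{x | P x} ≤ #(({x | Q x} : Finset α) ∪ s.biUnion fun i => ({x | R i x} : Finset α)) :=
        card_le_card fun x hx => by simpa using h x (by simpa using hx)
    _ ≤ _ := (card_union_le _ _).trans (Nat.add_le_add_left card_biUnion_le _)

theorem Nat.lt_sub_one_of_mem_properDivisors {m d : ℕ} (hm : 3 ≤ m) (hd : d ∈ m.properDivisors) :
    d < m - 1 := by
  obtain ⟨⟨k, rfl⟩, hlt⟩ := Nat.mem_properDivisors.mp hd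
  have hk : 2 ≤ k := by
    by_contra! hk
    interval_cases k <;> omega
  have : 2 * d ≤ d * k := by nlinarith
  omega

theorem sum_properDivisors_gcd_add_le {q m : ℕ} (hq : 2 ≤ q) (hm : 2 ≤ m) :
    ∑ d ∈ m.properDivisors, Nat.gcd (∑ i ∈ range m, q ^ i) (q ^ d - 1) + (q ^ (m - 1) - 1) ≤
      ∑ i ∈ range m, q ^ i := by
  obtain rfl | hm3 := hm.eq_or_lt
  · have hgcd : Nat.gcd (1 + q) (q - 1) ∣ 2 := by
      have := Nat.dvd_sub (Nat.gcd_dvd_left (1 + q) (q - 1)) (Nat.gcd_dvd_right (1 + q) (q - 1))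
      rwa [show 1 + q - (q - 1) = 2 by omega] at this
    have := Nat.le_of_dvd two_pos hgcd
    rw [show (2 : ℕ).properDivisors = {1} from rfl]
    simp only [sum_singleton, sum_range_succ, range_zero, sum_empty, pow_zero, pow_one, zero_add,
      Nat.reduceSub]
    omega
  · have hbad : ∑ d ∈ m.properDivisors, Nat.gcd (∑ i ∈ range m, q ^ i) (q ^ d - 1) ≤
        ∑ d ∈ range (m - 1), q ^ d :=
      calc _ ≤ ∑ d ∈ m.properDivisors, q ^ d :=
            sum_le_sum fun d hd => (Nat.gcd_le_right _ (Nat.sub_pos_of_lt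
              (Nat.one_lt_pow (Nat.pos_of_mem_properDivisors hd).ne' hq))).trans (Nat.sub_le _ _)
        _ ≤ _ := sum_le_sum_of_subset fun d hd =>
            mem_range.mpr (Nat.lt_sub_one_of_mem_properDivisors hm3 hd)
    have hsplit := sum_range_succ (q ^ ·) (m - 1)
    rw [Nat.sub_add_cancel (by omega)] at hsplit
    omega

theorem IntermediateField.finrank_mem_properDivisors {K L : Type*} [Field K] [Field L]
    [Algebra K L] [FiniteDimensional K L] {E : IntermediateField K L} (hE : E ≠ ⊤) :
    finrank K E ∈ (finrank K L).properDivisors := by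
  have hEL : finrank E L ≠ 1 := mt IntermediateField.finrank_eq_one_iff_eq_top.mp hE
  have hpos : 0 < finrank E L := finrank_pos
  have hd : 0 < finrank K E := finrank_pos
  rw [Nat.mem_properDivisors, ← finrank_mul_finrank K E L]
  exact ⟨dvd_mul_right _ _, lt_mul_of_one_lt_right hd (by omega)⟩

section FiniteField

variable {K L : Type*} [Field K] [Field L] [Fintype K] [Algebra K L]

theorem exists_mem_properDivisors_pow_eq_one_of_not_isGeneralPosition [Finite L]
    {θ : Lˣ →* ℂˣ} (h : ¬ IsGeneralPosition K θ) :
    ∃ d ∈ (finrank K L).properDivisors, θ ^ (Fintype.card K ^ d - 1) = 1 := by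
  obtain ⟨E, hE, θ', rfl⟩ := not_not.mp h
  refine ⟨finrank K E, E.finrank_mem_properDivisors hE, MonoidHom.ext fun x => ?_⟩
  have hcard : Nat.card Eˣ = Fintype.card K ^ finrank K E - 1 := by
    rw [Nat.card_units, natCard_eq_pow_finrank (K := K), Nat.card_eq_fintype_card]
  rw [MonoidHom.pow_apply, MonoidHom.comp_apply, ← map_pow, ← hcard, pow_card_eq_one', map_one,
    MonoidHom.one_apply]

theorem card_quotient_range_units_map_algebraMap [Fintype L] :
    Nat.card (Lˣ ⧸ (Units.map (algebraMap K L : K →* L)).range) =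
      ∑ i ∈ range (finrank K L), Fintype.card K ^ i := by
  have hinj : Function.Injective (Units.map (algebraMap K L : K →* L)) :=
    Units.map_injective (algebraMap K L).injective
  have hmul := Subgroup.card_mul_index (Units.map (algebraMap K L : K →* L)).range
  rw [← Nat.card_congr (MonoidHom.ofInjective hinj).toEquiv, Nat.card_units, Nat.card_units,
    Nat.card_eq_fintype_card, Nat.card_eq_fintype_card, card_eq_pow_finrank (K := K) (V := L)]
    at hmul
  rw [Nat.geomSum_eq Fintype.one_lt_card, ← hmul, Nat.mul_div_cancel_left _ (by
    have := Fintype.one_lt_card (α := K); omega)]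
  rfl

end FiniteField

/-- Let `K ⊆ L` be finite fields with `|K| = q` and `[L : K] = m ≥ 2`, and let `χ₀` be a
character of `Kˣ`.  Then the number of characters `θ` of `Lˣ` in general position with
`θ|_{Kˣ} = χ₀` is at least `q ^ (m - 1) - 1`. -/
theorem card_general_position_ge
    (K L : Type*) [Field K] [Field L] [Fintype K] [Fintype L] [Algebra K L]
    (q m : ℕ) (hq : Fintype.card K = q) (hm : Module.finrank K L = m) (hm2 : 2 ≤ m)
    (χ₀ : Kˣ →* ℂˣ) :
    q ^ (m - 1) - 1 ≤
      Nat.card {θ : Lˣ →* ℂˣ // IsGeneralPosition K θ ∧ charRestrict K θ = χ₀} := by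
  subst hq hm
  have hinj : Function.Injective (Units.map (algebraMap K L : K →* L)) :=
    Units.map_injective (algebraMap K L).injective
  set H := (Units.map (algebraMap K L : K →* L)).range
  set χ : H →* ℂˣ := χ₀.comp (MonoidHom.ofInjective hinj).symm.toMonoidHom
  have := CommGroup.finite_monoidHom_of_hasEnoughRootsOfUnity (G := Lˣ) (M := ℂ)
  have hfiber : Nat.card {θ : Lˣ →* ℂˣ // charRestrict K θ = χ₀} = Nat.card (Lˣ ⧸ H) := by
    rw [← CommGroup.card_domRestrict_eq_card_quotient H χ]
    exact Nat.card_congr (Equiv.subtypeEquivRight fun θ =>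
      MonoidHom.comp_eq_iff_domRestrict_range_eq hinj θ χ₀)
  have hcover := Nat.card_subtype_le_card_add_sum (finrank K L).properDivisors
    (P := fun θ : Lˣ →* ℂˣ => charRestrict K θ = χ₀)
    (Q := fun θ => IsGeneralPosition K θ ∧ charRestrict K θ = χ₀)
    (R := fun d θ => θ.domRestrict H = χ ∧ θ ^ (Fintype.card K ^ d - 1) = 1) fun θ hθ => by
      by_cases hgp : IsGeneralPosition K θ
      · exact .inl ⟨hgp, hθ⟩
      · obtain ⟨d, hd, hpow⟩ := exists_mem_properDivisors_pow_eq_one_of_not_isGeneralPosition hgp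
        exact .inr ⟨d, hd, (MonoidHom.comp_eq_iff_domRestrict_range_eq hinj θ χ₀).mp hθ, hpow⟩
  have hcount := sum_properDivisors_gcd_add_le (Fintype.one_lt_card (α := K)) hm2
  have hbad := sum_le_sum fun d (_ : d ∈ (finrank K L).properDivisors) =>
    IsCyclic.card_domRestrict_pow_eq_one_le_gcd H χ (Fintype.card K ^ d - 1)
  rw [card_quotient_range_units_map_algebraMap] at hfiber hbad
  omega
end

section
/- Let p be a prime and let n ≥ 1, r ≥ 1 be integers. The set B of elements g of GL_n(ℤ/p^rℤ) whose underlying matrix is upper triangular (i.e., the (i,j) entry is 0 whenever i > j) is a subgroup of GL_n(ℤ/p^rℤ), and its index satisfies [GL_n(ℤ/p^rℤ) : B] ≤ 2^n · p^{r·n(n−1)/2}. -/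
/-!
An invertible upper triangular matrix is determined by its diagonal, a vector of units, and
its `n.choose 2` entries above the diagonal, which are arbitrary; so
`|B| ≥ |Rˣ|ⁿ |R|^(n.choose 2)`, while `|GL n R| ≤ |R|^(n²) = |R|ⁿ |R|^(2 · n.choose 2)`.
For `R = ℤ/p^rℤ` one has `|R| = p^r ≤ 2 φ(p^r) = 2 |Rˣ|`, which leaves `[GL n R : B] ≤ 2ⁿ |R|^(n.choose 2)`.
-/

open Matrix

theorem Nat.Prime.pow_le_two_mul_totient_pow {p : ℕ} (hp : p.Prime) :
    ∀ r : ℕ, p ^ r ≤ 2 * (p ^ r).totient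
  | 0 => by simp
  | r + 1 => by
    rw [Nat.totient_prime_pow_succ hp, pow_succ, mul_left_comm]
    exact Nat.mul_le_mul_left _ (by have := hp.two_le; omega)

namespace Matrix

variable {ι R : Type*} [DecidableEq ι] [LinearOrder ι] [CommRing R]

def upperTriangularMk (d : ι → Rˣ) (u : {x : ι × ι // x.1 < x.2} → R) : Matrix ι ι R :=
  of fun i j => if i = j then (d i : R) else if h : i < j then u ⟨(i, j), h⟩ else 0

theorem upperTriangularMk_isUpperTriangular (d : ι → Rˣ)
    (u : {x : ι × ι // x.1 < x.2} → R) :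
    (upperTriangularMk d u).IsUpperTriangular := fun i j (hji : j < i) ↦ by
  simp [upperTriangularMk, hji.ne', hji.not_gt]

theorem upperTriangularMk_injective :
    Function.Injective fun x : (ι → Rˣ) × ({x : ι × ι // x.1 < x.2} → R) ↦
      upperTriangularMk x.1 x.2 := by
  rintro ⟨d, u⟩ ⟨d', u'⟩ h
  have hd : d = d' := funext fun i ↦ Units.ext <| by
    simpa [upperTriangularMk] using congrFun₂ h i i
  have hu : u = u' := funext fun ⟨(i, j), hij⟩ ↦ by
    simpa [upperTriangularMk, hij.ne, hij] using congrFun₂ h i j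
  rw [hd, hu]

variable [Fintype ι]

theorem isUnit_upperTriangularMk (d : ι → Rˣ) (u : {x : ι × ι // x.1 < x.2} → R) :
    IsUnit (upperTriangularMk d u) := by
  rw [isUnit_iff_isUnit_det, det_of_isUpperTriangular (upperTriangularMk_isUpperTriangular d u)]
  simp [upperTriangularMk]

namespace GeneralLinearGroup

variable (ι R) in
def upperTriangular : Subgroup (GL ι R) where
  carrier := {g | (g : Matrix ι ι R).IsUpperTriangular}
  mul_mem' ha hb := ha.mul hb
  one_mem' := blockTriangular_one
  inv_mem' {g} hg := by
    have := g.invertible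
    simpa [coe_units_inv] using blockTriangular_inv_of_blockTriangular hg

theorem card_units_pow_mul_card_pow_le_card_upperTriangular [Finite R] :
    Nat.card Rˣ ^ Fintype.card ι * Nat.card R ^ (Fintype.card ι).choose 2 ≤
      Nat.card (upperTriangular ι R) := by
  let toB (x : (ι → Rˣ) × ({x : ι × ι // x.1 < x.2} → R)) : upperTriangular ι R :=
    ⟨(isUnit_upperTriangularMk x.1 x.2).unit, upperTriangularMk_isUpperTriangular x.1 x.2⟩
  calc _ = Nat.card ((ι → Rˣ) × ({x : ι × ι // x.1 < x.2} → R)) := by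
        rw [Nat.card_prod, Nat.card_fun, Nat.card_fun, Nat.card_eq_fintype_card (α := ι),
          Nat.card_eq_fintype_card (α := {x : ι × ι // x.1 < x.2}), Fintype.card_subtype,
          Fintype.card_product_filter_lt]
    _ ≤ _ := Nat.card_le_card_of_injective toB <|
        Function.Injective.of_comp
          (f := fun b : upperTriangular ι R ↦ ((b : GL ι R) : Matrix ι ι R))
          upperTriangularMk_injective

theorem index_upperTriangular_le [Finite R] {c : ℕ} (hc : Nat.card R ≤ c * Nat.card Rˣ) :
    (upperTriangular ι R).index ≤
      c ^ Fintype.card ι * Nat.card R ^ (Fintype.card ι).choose 2 := by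
  set N := Fintype.card ι
  set B := upperTriangular ι R
  have hN : N * N = N + N.choose 2 + N.choose 2 := by
    rw [add_assoc, ← two_mul, Nat.choose_two_right,
      Nat.mul_div_cancel' (Nat.even_mul_pred_self N).two_dvd, Nat.mul_sub_one,
      Nat.add_sub_cancel' (Nat.le_mul_self N)]
  refine Nat.le_of_mul_le_mul_right ?_ (Nat.card_pos (α := B))
  calc B.index * Nat.card B = Nat.card (GL ι R) := B.index_mul_card
    _ ≤ Nat.card (Matrix ι ι R) := Nat.card_le_card_of_injective _ Units.val_injective
    _ = Nat.card R ^ N * Nat.card R ^ N.choose 2 * Nat.card R ^ N.choose 2 := by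
        rw [Matrix, Nat.card_fun, Nat.card_fun, ← pow_mul, Nat.card_eq_fintype_card (α := ι),
          hN, pow_add, pow_add]
    _ ≤ (c * Nat.card Rˣ) ^ N * Nat.card R ^ N.choose 2 * Nat.card R ^ N.choose 2 := by gcongr
    _ = c ^ N * Nat.card R ^ N.choose 2 * (Nat.card Rˣ ^ N * Nat.card R ^ N.choose 2) := by ring
    _ ≤ _ := Nat.mul_le_mul_left _ card_units_pow_mul_card_pow_le_card_upperTriangular

end GeneralLinearGroup

end Matrix

theorem upper_triangular_subgroup_index_le_general
    (p : ℕ) (hp : p.Prime) (n r : ℕ) :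
    ∃ B : Subgroup (GL (Fin n) (ZMod (p ^ r))),
      (B : Set (GL (Fin n) (ZMod (p ^ r)))) =
        {g : GL (Fin n) (ZMod (p ^ r)) | ∀ i j : Fin n, j < i →
          (g : Matrix (Fin n) (Fin n) (ZMod (p ^ r))) i j = 0} ∧
      B.index ≤ 2 ^ n * p ^ (r * (n * (n - 1)) / 2) := by
  have : NeZero (p ^ r) := ⟨pow_ne_zero r hp.ne_zero⟩
  refine ⟨GeneralLinearGroup.upperTriangular (Fin n) (ZMod (p ^ r)), rfl, ?_⟩
  have hcard : Nat.card (ZMod (p ^ r)) ≤ 2 * Nat.card (ZMod (p ^ r))ˣ := by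
    rw [Nat.card_zmod, Nat.card_eq_fintype_card, ZMod.card_units_eq_totient]
    exact hp.pow_le_two_mul_totient_pow r
  calc _ ≤ 2 ^ n * (p ^ r) ^ n.choose 2 := by
        simpa using GeneralLinearGroup.index_upperTriangular_le (ι := Fin n) hcard
    _ = _ := by
        rw [← pow_mul, Nat.choose_two_right,
          Nat.mul_div_assoc _ (Nat.even_mul_pred_self n).two_dvd]

/-- Let `p` be a prime and `n ≥ 1`, `r ≥ 1` integers.  The set of elements of
`GL n (ℤ/p^rℤ)` whose underlying matrix is upper triangular (i.e. the `(i,j)` entry is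
`0` whenever `i > j`) is a subgroup `B` of `GL n (ℤ/p^rℤ)`, and its index satisfies
`[GL n (ℤ/p^rℤ) : B] ≤ 2 ^ n * p ^ (r * n * (n - 1) / 2)`. -/
theorem upper_triangular_subgroup_index_le
    (p : ℕ) (hp : p.Prime) (n r : ℕ) (hn : 1 ≤ n) (hr : 1 ≤ r) :
    ∃ B : Subgroup (GL (Fin n) (ZMod (p ^ r))),
      (B : Set (GL (Fin n) (ZMod (p ^ r)))) =
        {g : GL (Fin n) (ZMod (p ^ r)) | ∀ i j : Fin n, j < i →
          (g : Matrix (Fin n) (Fin n) (ZMod (p ^ r))) i j = 0} ∧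
      B.index ≤ 2 ^ n * p ^ (r * (n * (n - 1)) / 2) :=
  upper_triangular_subgroup_index_le_general p hp n r
end
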